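/- Let M ∈ ℝ^{k×d} have full row rank, W = N M† with ‖W‖ ≤ 1 for some sub-multiplicative norm, 0 ≤ γ < 1, D positive diagonal, η > 0 with η ρ(M Mᵀ D) < 1, B = Σ_{i=0}^{m−1}(I − η D M Mᵀ)^i for m large enough that ρ(γW + (I − γW)(I − η M Mᵀ D)^m) < 1. Then the sequence defined by θ_{(n+1)m} = (I − η Mᵀ B D (M − γN)) θ_{nm} + η Mᵀ B D R with θ₀ = 0 converges as n → ∞ to θ* = M†(I − γW)⁻¹ R. -/

import Mathlib

/-!
The update is the preconditioned Richardson iteration `θ ↦ θ + K (R - L θ)` with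
`K = η Mᵀ B D` and `L = M - γ N`. Summing the geometric series gives
`M Mᵀ B (η D) = 1 - (1 - η M Mᵀ D)^m`, so `1 - Γ = (1 - γ W) (M Mᵀ) (B (η D))` where
`Γ = γ W + (1 - γ W) (1 - η M Mᵀ D)^m`. As `ρ(Γ) < 1`, the product `1 - Γ` is invertible, hence so
are `M Mᵀ`, `1 - γ W` and `B (η D)`; then `N Mᵀ = W M Mᵀ` and `L K = 1 - Γ`. The intertwining
`(1 - K L) K = K Γ` turns the error `θ* - θₙ` into `K Γⁿ (L K)⁻¹ R`, which tends to zero by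
Gelfand's formula, and the fixed point `K (L K)⁻¹ R` simplifies to `M† (1 - γ W)⁻¹ R`.
-/

open Matrix Filter Topology

noncomputable def specRad {n : Type*} [Fintype n] [DecidableEq n] (A : Matrix n n ℝ) : ℝ :=
  sSup ((fun z : ℂ => ‖z‖) '' spectrum ℂ (A.map fun x => (x : ℂ)))

noncomputable def pinv {k d : ℕ} (M : Matrix (Fin k) (Fin d) ℝ) : Matrix (Fin d) (Fin k) ℝ :=
  Mᵀ * (M * Mᵀ)⁻¹

open scoped NNReal ENNReal

theorem tendsto_pow_atTop_nhds_zero_of_spectralRadius_lt_one {A : Type*} [NormedRing A]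
    [NormedAlgebra ℂ A] [CompleteSpace A] {a : A} (h : spectralRadius ℂ a < 1) :
    Tendsto (fun t : ℕ => a ^ t) atTop (𝓝 0) := by
  obtain ⟨c, hρc, hc1⟩ := exists_between h
  lift c to ℝ≥0 using hc1.ne_top
  have hgelfand := spectrum.pow_nnnorm_pow_one_div_tendsto_nhds_spectralRadius a
  have hbound : ∀ᶠ t : ℕ in atTop, ‖a ^ t‖ ≤ (c : ℝ) ^ t := by
    filter_upwards [hgelfand.eventually_lt_const hρc, eventually_gt_atTop 0] with t ht ht0
    rw [one_div, ENNReal.rpow_inv_lt_iff (by positivity), ENNReal.rpow_natCast] at ht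
    exact_mod_cast ht.le
  exact squeeze_zero_norm' hbound (tendsto_pow_atTop_nhds_zero_of_lt_one c.2 (mod_cast hc1))

section SpectralRadius

variable {n : Type*} [Fintype n] [DecidableEq n]

theorem norm_le_specRad {A : Matrix n n ℝ} {z : ℂ} (hz : z ∈ spectrum ℂ (A.map ((↑) : ℝ → ℂ))) :
    ‖z‖ ≤ specRad A :=
  le_csSup ((Matrix.finite_spectrum _).image _).bddAbove ⟨z, hz, rfl⟩

theorem isUnit_one_sub_of_specRad_lt_one {A : Matrix n n ℝ} (h : specRad A < 1) :
    IsUnit (1 - A) := by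
  by_contra hA
  have h1 : (1 : ℂ) ∈ spectrum ℂ (A.map ((↑) : ℝ → ℂ)) := by
    have hmap : algebraMap ℂ _ 1 - A.map ((↑) : ℝ → ℂ) = Complex.ofRealHom.mapMatrix (1 - A) := by
      rw [map_one, map_sub, map_one]; rfl
    rwa [spectrum.mem_iff, hmap, isUnit_iff_isUnit_det, ← RingHom.map_det, isUnit_map_iff,
      ← isUnit_iff_isUnit_det]
  exact (norm_le_specRad h1).not_gt (by simpa using h)

theorem tendsto_pow_atTop_nhds_zero_of_specRad_lt_one {A : Matrix n n ℝ} (h : specRad A < 1) :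
    Tendsto (fun t : ℕ => A ^ t) atTop (𝓝 0) := by
  -- A Banach-algebra norm whose topology is the product topology on matrices.
  let : NormedRing (Matrix n n ℂ) := Matrix.linftyOpNormedRing
  let : NormedAlgebra ℂ (Matrix n n ℂ) := Matrix.linftyOpNormedAlgebra
  have : CompleteSpace (Matrix n n ℂ) := FiniteDimensional.complete ℂ _
  have hρ : spectralRadius ℂ (A.map ((↑) : ℝ → ℂ)) < 1 := by
    refine lt_of_le_of_lt (iSup₂_le fun z hz => ?_) (ENNReal.ofReal_lt_one.mpr h)
    rw [← ENNReal.ofReal_coe_nnreal, coe_nnnorm]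
    exact ENNReal.ofReal_le_ofReal (norm_le_specRad hz)
  have hre : Continuous fun P : Matrix n n ℂ => P.map Complex.re := by fun_prop
  have := (hre.tendsto 0).comp (tendsto_pow_atTop_nhds_zero_of_spectralRadius_lt_one hρ)
  convert this using 2 with t
  · change A ^ t = (Complex.ofRealHom.mapMatrix A ^ t).map Complex.re
    rw [← map_pow]
    ext
    simp
  · simp

end SpectralRadius

theorem mul_geom_sum_one_sub_mul_mul {α : Type*} [Ring α] (a b : α) (m : ℕ) :
    a * (∑ i ∈ Finset.range m, (1 - b * a) ^ i) * b = 1 - (1 - a * b) ^ m := by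
  have hsemiconj : SemiconjBy a (1 - b * a) (1 - a * b) := by
    simp only [SemiconjBy, mul_sub, sub_mul, mul_one, one_mul, mul_assoc]
  rw [Finset.mul_sum, Finset.sum_mul]
  simp_rw [(hsemiconj.pow_right _).eq, mul_assoc, ← Finset.sum_mul]
  have hgeom := geom_sum_mul (1 - a * b) m
  rw [sub_sub_cancel_left, mul_neg] at hgeom
  exact (neg_eq_iff_eq_neg.mp hgeom).trans (neg_sub _ _)

section AffineIteration

variable {ι κ R : Type*} [Fintype ι] [DecidableEq ι] [Fintype κ] [DecidableEq κ] [CommRing R]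

theorem Matrix.pow_mul_eq_mul_pow_of_mul_eq_mul {A : Matrix ι ι R} {K : Matrix ι κ R}
    {C : Matrix κ κ R} (h : A * K = K * C) (n : ℕ) : A ^ n * K = K * C ^ n := by
  induction n with
  | zero => simp
  | succ n ih => rw [pow_succ', Matrix.mul_assoc, ih, ← Matrix.mul_assoc, h, Matrix.mul_assoc,
      ← pow_succ']

theorem Matrix.iterate_eq_sub_pow_mulVec {A : Matrix ι ι R} {b θs : ι → R} {θ : ℕ → ι → R}
    (hfix : A *ᵥ θs + b = θs) (h0 : θ 0 = 0) (hrec : ∀ n, θ (n + 1) = A *ᵥ θ n + b) (n : ℕ) :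
    θ n = θs - (A ^ n) *ᵥ θs := by
  induction n with
  | zero => rw [h0, pow_zero, one_mulVec, sub_self]
  | succ n ih =>
    calc θ (n + 1) = (A *ᵥ θs + b) - A ^ (n + 1) *ᵥ θs := by
          rw [hrec, ih, mulVec_sub, mulVec_mulVec, ← pow_succ']; abel
      _ = θs - A ^ (n + 1) *ᵥ θs := by rw [hfix]

end AffineIteration

section Richardson

variable {ι κ : Type*} [Fintype ι] [DecidableEq ι] [Fintype κ] [DecidableEq κ]

theorem tendsto_richardson_of_specRad_lt_one {K : Matrix ι κ ℝ} {L : Matrix κ ι ℝ} {r : κ → ℝ}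
    (hρ : specRad (1 - L * K) < 1) {θ : ℕ → ι → ℝ} (h0 : θ 0 = 0)
    (hrec : ∀ n, θ (n + 1) = (1 - K * L) *ᵥ θ n + K *ᵥ r) :
    Tendsto θ atTop (𝓝 ((K * (L * K)⁻¹) *ᵥ r)) := by
  have hLK : IsUnit (L * K).det :=
    (isUnit_iff_isUnit_det _).mp (by simpa using isUnit_one_sub_of_specRad_lt_one hρ)
  have hfix : (1 - K * L) *ᵥ ((K * (L * K)⁻¹) *ᵥ r) + K *ᵥ r = (K * (L * K)⁻¹) *ᵥ r := by
    rw [mulVec_mulVec, ← add_mulVec]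
    congr 1
    simp only [Matrix.sub_mul, Matrix.one_mul, Matrix.mul_assoc]
    rw [← Matrix.mul_assoc L, mul_nonsing_inv _ hLK, Matrix.mul_one, sub_add_cancel]
  have hcomm : (1 - K * L) * K = K * (1 - L * K) := by
    simp only [Matrix.sub_mul, Matrix.mul_sub, Matrix.one_mul, Matrix.mul_one, Matrix.mul_assoc]
  have hθ : θ = fun n => (K * (L * K)⁻¹) *ᵥ r - (K * (1 - L * K) ^ n * (L * K)⁻¹) *ᵥ r :=
    funext fun n => by
      rw [iterate_eq_sub_pow_mulVec hfix h0 hrec, mulVec_mulVec, ← Matrix.mul_assoc,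
        pow_mul_eq_mul_pow_of_mul_eq_mul hcomm]
  have hcont : Continuous fun P : Matrix κ κ ℝ => (K * P * (L * K)⁻¹) *ᵥ r := by fun_prop
  rw [hθ]
  simpa using tendsto_const_nhds.sub ((hcont.tendsto 0).comp
    (tendsto_pow_atTop_nhds_zero_of_specRad_lt_one hρ))

end Richardson

theorem stmt7_general {k d : ℕ} (M N : Matrix (Fin k) (Fin d) ℝ) (D : Matrix (Fin k) (Fin k) ℝ)
    (η : ℝ) (γ : ℝ) (m : ℕ)
    (hmρ : specRad (γ • (N * pinv M) +
      (1 - γ • (N * pinv M)) * (1 - η • (M * Mᵀ * D)) ^ m) < 1)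
    (R : Fin k → ℝ) (θ : ℕ → Fin d → ℝ) (hθ0 : θ 0 = 0)
    (hrec : ∀ n : ℕ, θ (n + 1) =
      (1 - η • (Mᵀ * (∑ i ∈ Finset.range m, (1 - η • (D * M * Mᵀ)) ^ i) * D *
        (M - γ • N))).mulVec (θ n) +
      η • (Mᵀ * (∑ i ∈ Finset.range m, (1 - η • (D * M * Mᵀ)) ^ i) * D).mulVec R) :
    Tendsto θ atTop (nhds ((pinv M).mulVec ((1 - γ • (N * pinv M))⁻¹.mulVec R))) := by
  set S := M * Mᵀ
  set T := 1 - γ • (N * pinv M) with hT_def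
  set B := ∑ i ∈ Finset.range m, (1 - η • (D * M * Mᵀ)) ^ i
  set X := B * (η • D)
  have hSX : S * X = 1 - (1 - η • (S * D)) ^ m := by
    rw [← Matrix.mul_smul, ← mul_geom_sum_one_sub_mul_mul S (η • D) m]
    simp only [X, B, S, Matrix.smul_mul, Matrix.mul_smul, Matrix.mul_assoc]
  have hΓ : γ • (N * pinv M) + T * (1 - η • (S * D)) ^ m = 1 - T * S * X := by
    rw [Matrix.mul_assoc T, hSX, Matrix.mul_sub, Matrix.mul_one, hT_def]
    abel
  have hunit : IsUnit (T * S * X) := by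
    simpa [hΓ] using isUnit_one_sub_of_specRad_lt_one hmρ
  have hS : IsUnit S.det :=
    (isUnit_iff_isUnit_det _).mp (isUnit_of_mul_isUnit_right (isUnit_of_mul_isUnit_left hunit))
  have hX : IsUnit X.det := (isUnit_iff_isUnit_det _).mp (isUnit_of_mul_isUnit_right hunit)
  have hK : η • (Mᵀ * B * D) = Mᵀ * X := by simp only [X, Matrix.mul_smul, Matrix.mul_assoc]
  clear_value X
  have hMS : (M - γ • N) * Mᵀ = T * S := by
    rw [hT_def, Matrix.sub_mul, Matrix.sub_mul, Matrix.one_mul, Matrix.smul_mul, Matrix.smul_mul,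
      pinv, Matrix.mul_assoc N, Matrix.mul_assoc Mᵀ, nonsing_inv_mul _ hS, Matrix.mul_one]
  have hLK : (M - γ • N) * (Mᵀ * X) = T * S * X := by rw [← Matrix.mul_assoc, hMS]
  have hlim := tendsto_richardson_of_specRad_lt_one (K := Mᵀ * X) (L := M - γ • N) (r := R)
    (by rwa [hLK, ← hΓ]) hθ0 (fun n => by rw [hrec n, ← hK, Matrix.smul_mul, smul_mulVec])
  have hpinv : Mᵀ * X * (T * S * X)⁻¹ = pinv M * T⁻¹ := by
    rw [Matrix.mul_inv_rev, Matrix.mul_inv_rev, ← Matrix.mul_assoc, Matrix.mul_assoc Mᵀ X,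
      mul_nonsing_inv _ hX, Matrix.mul_one, pinv, Matrix.mul_assoc]
  rwa [hLK, hpinv, ← mulVec_mulVec] at hlim

theorem stmt7 {k d : ℕ} (M N : Matrix (Fin k) (Fin d) ℝ) (D : Matrix (Fin k) (Fin k) ℝ)
    (hM : IsUnit (M * Mᵀ)) (hDdiag : ∀ i j, i ≠ j → D i j = 0) (hDpos : ∀ i, 0 < D i i)
    (η : ℝ) (hη : 0 < η) (hρ : η * specRad (M * Mᵀ * D) < 1)
    -- a sub-multiplicative matrix norm ν with ν (N M†) ≤ 1
    (ν : Matrix (Fin k) (Fin k) ℝ → ℝ)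
    (hν0 : ∀ A, ν A = 0 → A = 0)
    (hνadd : ∀ A B, ν (A + B) ≤ ν A + ν B)
    (hνsmul : ∀ (c : ℝ) A, ν (c • A) = |c| * ν A)
    (hνmul : ∀ A B, ν (A * B) ≤ ν A * ν B)
    (hW : ν (N * pinv M) ≤ 1)
    (γ : ℝ) (hγ0 : 0 ≤ γ) (hγ1 : γ < 1)
    (m : ℕ) (hm : 1 ≤ m)
    (hmρ : specRad (γ • (N * pinv M) +
      (1 - γ • (N * pinv M)) * (1 - η • (M * Mᵀ * D)) ^ m) < 1)
    (R : Fin k → ℝ) (θ : ℕ → Fin d → ℝ) (hθ0 : θ 0 = 0)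
    (hrec : ∀ n : ℕ, θ (n + 1) =
      (1 - η • (Mᵀ * (∑ i ∈ Finset.range m, (1 - η • (D * M * Mᵀ)) ^ i) * D *
        (M - γ • N))).mulVec (θ n) +
      η • (Mᵀ * (∑ i ∈ Finset.range m, (1 - η • (D * M * Mᵀ)) ^ i) * D).mulVec R) :
    Tendsto θ atTop (nhds ((pinv M).mulVec ((1 - γ • (N * pinv M))⁻¹.mulVec R))) :=
  stmt7_general M N D η γ m hmρ R θ hθ0 hrec
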